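/- arXiv:math/0611202 — 4 statements merged into one kernel-verified Lean document; each statement's English description precedes it below -/
import Mathlib

section
/- Let P and N be smooth matrix-valued maps on ℝⁿ such that P(x) is skew-symmetric and N(x)P(x) is skew-symmetric for every x (equivalently, Σ_l (P^{lj} N^k_l + P^{lk} N^j_l) = 0 for all j, k, pointwise). Then for every index j and every point of ℝⁿ, the contracted Magri–Morosi concomitant satisfies Σ_k C^{kj}_k = Σ_l P^{lj} ∂_l (Tr N) + 2 Σ_{l,k} P^{lk} ∂_k N^j_l. -/
open Matrix BigOperators

/-- Partial derivative in the `l`-th coordinate direction. -/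
noncomputable def pd {n : ℕ} (l : Fin n) (f : (Fin n → ℝ) → ℝ) (x : Fin n → ℝ) : ℝ :=
  fderiv ℝ f x (Pi.single l 1)

/-- The Magri–Morosi concomitant `C(P,N)^{kj}_m` in coordinates. -/
noncomputable def MagriMorosi {n : ℕ}
    (P N : (Fin n → ℝ) → Matrix (Fin n) (Fin n) ℝ)
    (k j m : Fin n) (x : Fin n → ℝ) : ℝ :=
  ∑ l, (P x l j * pd l (fun y => N y k m) x
      + P x k l * pd l (fun y => N y j m) x
      - N x l m * pd l (fun y => P y k j) x
      + N x j l * pd m (fun y => P y k l) x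
      - P x l j * pd m (fun y => N y k l) x)

lemma pd_sum_aux {n : ℕ} (l : Fin n) (f : Fin n → (Fin n → ℝ) → ℝ) (x : Fin n → ℝ)
    (hf : ∀ k, DifferentiableAt ℝ (f k) x) :
    pd l (fun y => ∑ k, f k y) x = ∑ k, pd l (f k) x := by
  unfold pd
  rw [fderiv_fun_sum fun k _ => hf k]
  simp

lemma pd_add_aux {n : ℕ} (l : Fin n) {f g : (Fin n → ℝ) → ℝ} (x : Fin n → ℝ)
    (hf : DifferentiableAt ℝ f x) (hg : DifferentiableAt ℝ g x) :
    pd l (fun y => f y + g y) x = pd l f x + pd l g x := by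
  unfold pd
  rw [fderiv_fun_add hf hg]
  simp

lemma pd_mul_aux {n : ℕ} (l : Fin n) {f g : (Fin n → ℝ) → ℝ} (x : Fin n → ℝ)
    (hf : DifferentiableAt ℝ f x) (hg : DifferentiableAt ℝ g x) :
    pd l (fun y => f y * g y) x = pd l f x * g x + f x * pd l g x := by
  unfold pd
  rw [fderiv_fun_mul hf hg]
  simp
  ring

theorem trace_of_concomitant
    {n : ℕ} (hn : 1 ≤ n)
    (P N : (Fin n → ℝ) → Matrix (Fin n) (Fin n) ℝ)
    (hP : ∀ i j : Fin n, ContDiff ℝ (⊤ : ℕ∞) (fun x => P x i j))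
    (hN : ∀ i j : Fin n, ContDiff ℝ (⊤ : ℕ∞) (fun x => N x i j))
    (hskewP : ∀ x, (P x)ᵀ = -(P x))
    (hskewNP : ∀ x, (N x * P x)ᵀ = -(N x * P x)) :
    ∀ (j : Fin n) (x : Fin n → ℝ),
      ∑ k, MagriMorosi P N k j k x
        = ∑ l, P x l j * pd l (fun y => ∑ k, N y k k) x
          + 2 * ∑ l, ∑ k, P x l k * pd k (fun y => N y j l) x := by
  intro j x
  have hPd : ∀ a b : Fin n, ∀ y, DifferentiableAt ℝ (fun z => P z a b) y :=
    fun a b y => ((hP a b).differentiable (by simp)).differentiableAt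
  have hNd : ∀ a b : Fin n, ∀ y, DifferentiableAt ℝ (fun z => N z a b) y :=
    fun a b y => ((hN a b).differentiable (by simp)).differentiableAt
  -- pointwise skewness of P
  have hPs : ∀ (y : Fin n → ℝ) (a b : Fin n), P y a b = - P y b a := by
    intro y a b
    have h := congrFun (congrFun (hskewP y) b) a
    simpa using h
  -- derivative version of skewness of P
  have hdP : ∀ m a b : Fin n, pd m (fun y => P y a b) x = - pd m (fun y => P y b a) x := by
    intro m a b
    have h : (fun y => P y a b) = fun y => -(P y b a) := funext fun y => hPs y a b
    rw [h]
    unfold pd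
    rw [fderiv_fun_neg]
    simp
  -- key identity from differentiating skewness of N*P
  have key : ∀ k : Fin n,
      ∑ l, (pd k (fun y => N y j l) x * P x l k + N x j l * pd k (fun y => P y l k) x
          + (pd k (fun y => N y k l) x * P x l j + N x k l * pd k (fun y => P y l j) x)) = 0 := by
    intro k
    have hzero : (fun y => ∑ l, (N y j l * P y l k + N y k l * P y l j)) = fun _ => (0 : ℝ) := by
      funext y
      have h1 : (N y * P y) j k = -((N y * P y) k j) := by
        have := congrFun (congrFun (hskewNP y) k) j
        simpa using this
      have e1 : ∑ l, N y j l * P y l k = (N y * P y) j k := (Matrix.mul_apply).symm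
      have e2 : ∑ l, N y k l * P y l j = (N y * P y) k j := (Matrix.mul_apply).symm
      rw [Finset.sum_add_distrib, e1, e2, h1]
      ring
    have h2 : pd k (fun y => ∑ l, (N y j l * P y l k + N y k l * P y l j)) x = 0 := by
      rw [hzero]
      simp [pd]
    have h4 : pd k (fun y => ∑ l, (N y j l * P y l k + N y k l * P y l j)) x
        = ∑ l, (pd k (fun y => N y j l) x * P x l k + N x j l * pd k (fun y => P y l k) x
          + (pd k (fun y => N y k l) x * P x l j + N x k l * pd k (fun y => P y l j) x)) := by
      rw [pd_sum_aux k (fun l y => N y j l * P y l k + N y k l * P y l j) x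
        (fun l => (((hNd j l x).mul (hPd l k x)).add ((hNd k l x).mul (hPd l j x))))]
      refine Finset.sum_congr rfl fun l _ => ?_
      rw [pd_add_aux k x ((hNd j l x).fun_mul (hPd l k x)) ((hNd k l x).fun_mul (hPd l j x)),
          pd_mul_aux k x (hNd j l x) (hPd l k x), pd_mul_aux k x (hNd k l x) (hPd l j x)]
    rw [← h4]
    exact h2
  -- sum the key identity over k
  have h := Finset.sum_congr rfl (fun k (_ : k ∈ Finset.univ) => key k)
  rw [Finset.sum_const, smul_zero] at h
  simp only [Finset.sum_add_distrib] at h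
  -- flip the derivative indices in the second term of h
  have ht2 : ∑ k, ∑ l, N x j l * pd k (fun y => P y l k) x
      = -∑ k, ∑ l, N x j l * pd k (fun y => P y k l) x := by
    have e : ∀ k l : Fin n, N x j l * pd k (fun y => P y l k) x
        = -(N x j l * pd k (fun y => P y k l) x) := by
      intro k l; rw [hdP k l k]; ring
    simp only [e, Finset.sum_neg_distrib]
  -- trace term
  have htr : ∑ l, P x l j * pd l (fun y => ∑ k, N y k k) x
      = ∑ k, ∑ l, P x l j * pd l (fun y => N y k k) x := by
    rw [Finset.sum_comm]
    refine Finset.sum_congr rfl fun l _ => ?_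
    rw [pd_sum_aux l (fun k y => N y k k) x (fun k => hNd k k x), Finset.mul_sum]
  -- identification of the various double sums
  have hB : ∑ k, ∑ l, pd k (fun y => N y j l) x * P x l k
      = ∑ k, ∑ l, P x k l * pd l (fun y => N y j k) x := by
    rw [Finset.sum_comm]
    exact Finset.sum_congr rfl fun k _ => Finset.sum_congr rfl fun l _ => mul_comm _ _
  have hS : ∑ l, ∑ k, P x l k * pd k (fun y => N y j l) x
      = ∑ k, ∑ l, P x k l * pd l (fun y => N y j k) x := by
    rw [Finset.sum_comm]
  have hE : ∑ k, ∑ l, pd k (fun y => N y k l) x * P x l j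
      = ∑ k, ∑ l, P x l j * pd k (fun y => N y k l) x :=
    Finset.sum_congr rfl fun k _ => Finset.sum_congr rfl fun l _ => mul_comm _ _
  have hC : ∑ k, ∑ l, N x k l * pd k (fun y => P y l j) x
      = ∑ k, ∑ l, N x l k * pd l (fun y => P y k j) x := by
    rw [Finset.sum_comm]
  unfold MagriMorosi
  simp only [Finset.sum_add_distrib, Finset.sum_sub_distrib]
  rw [htr, hS]
  linarith [h, ht2, hB, hE, hC]
end

section
/- Let P and N be smooth matrix-valued maps on ℝⁿ such that P(x) is skew-symmetric and N(x)P(x) is skew-symmetric for every x. Then for every smooth covector field α : ℝⁿ → ℝⁿ (components α_j) and every point of ℝⁿ: (1/2) Σ_{j,k} C^{kj}_k α_j = (1/2) Σ_{l,j} P^{lj} (∂_l Tr N) α_j + Σ_{l,k} P^{lk} ∂_k ( Σ_j N^j_l α_j ) − Σ_{j,k} (N P)^{jk} ∂_k α_j, where (NP)^{jk} = Σ_l N^j_l P^{lk}. -/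
open Matrix BigOperators

lemma pd_sum {n : ℕ} (l : Fin n) (f : Fin n → (Fin n → ℝ) → ℝ) (x : Fin n → ℝ)
    (hf : ∀ i, DifferentiableAt ℝ (f i) x) :
    pd l (fun y => ∑ i, f i y) x = ∑ i, pd l (f i) x := by
  unfold pd
  rw [fderiv_fun_sum (fun i _ => hf i)]
  simp

lemma pd_mul {n : ℕ} (l : Fin n) (f g : (Fin n → ℝ) → ℝ) (x : Fin n → ℝ)
    (hf : DifferentiableAt ℝ f x) (hg : DifferentiableAt ℝ g x) :
    pd l (fun y => f y * g y) x = pd l f x * g x + f x * pd l g x := by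
  unfold pd
  rw [fderiv_fun_mul hf hg]
  simp [mul_comm]
  ring

lemma pd_neg {n : ℕ} (l : Fin n) (f : (Fin n → ℝ) → ℝ) (x : Fin n → ℝ) :
    pd l (fun y => -(f y)) x = -pd l f x := by
  unfold pd
  rw [fderiv_fun_neg]
  simp


lemma sum3_rot {n : ℕ} (f : Fin n → Fin n → Fin n → ℝ) :
    ∑ i, ∑ j, ∑ k, f i j k = ∑ k, ∑ i, ∑ j, f i j k := by
  rw [show (∑ i, ∑ j, ∑ k, f i j k) = ∑ i, ∑ k, ∑ j, f i j k from
    Finset.sum_congr rfl fun i _ => Finset.sum_comm]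
  exact Finset.sum_comm

lemma sum3_rev {n : ℕ} (f : Fin n → Fin n → Fin n → ℝ) :
    ∑ i, ∑ j, ∑ k, f i j k = ∑ k, ∑ j, ∑ i, f i j k := by
  rw [Finset.sum_comm]
  rw [show (∑ j, ∑ i, ∑ k, f i j k) = ∑ j, ∑ k, ∑ i, f i j k from
    Finset.sum_congr rfl fun j _ => Finset.sum_comm]
  exact Finset.sum_comm

lemma key {n : ℕ} (a b dα : Fin n → Fin n → ℝ) (dN dP : Fin n → Fin n → Fin n → ℝ)
    (αv : Fin n → ℝ)
    (hA' : ∀ m k j, dP m k j = - dP m j k)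
    (hB' : ∀ m j k, (∑ l, (dN m j l * a l k + b j l * dP m l k))
        = -∑ l, (dN m k l * a l j + b k l * dP m l j)) :
    (1/2 : ℝ) * ∑ j, ∑ k, (∑ l, (a l j * dN l k k + a k l * dN l j k
        - b l k * dP l k j + b j l * dP k k l - a l j * dN k k l)) * αv j
    = (1/2 : ℝ) * ∑ l, ∑ j, a l j * (∑ m, dN l m m) * αv j
      + ∑ l, ∑ k, a l k * (∑ j, (dN k j l * αv j + b j l * dα k j))
      - ∑ j, ∑ k, (∑ l, b j l * a l k) * dα k j := by
  have hBpp : ∀ j : Fin n, (∑ k, ∑ l, dN k j l * a l k)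
      = ∑ k, ∑ l, (b j l * dP k k l - dN k k l * a l j - b k l * dP k l j) := by
    intro j
    refine Finset.sum_congr rfl fun k _ => ?_
    have h := hB' k j k
    calc (∑ l, dN k j l * a l k)
        = ∑ l, ((dN k j l * a l k + b j l * dP k l k) + b j l * dP k k l) := by
          refine Finset.sum_congr rfl fun l _ => ?_
          rw [hA' k l k]; ring
      _ = (∑ l, (dN k j l * a l k + b j l * dP k l k)) + ∑ l, b j l * dP k k l :=
          Finset.sum_add_distrib
      _ = (-∑ l, (dN k k l * a l j + b k l * dP k l j)) + ∑ l, b j l * dP k k l := by rw [h]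
      _ = ∑ l, (b j l * dP k k l - dN k k l * a l j - b k l * dP k l j) := by
          simp only [Finset.sum_sub_distrib, Finset.sum_add_distrib]; ring
  -- summed-with-αv version, split into three triple sums
  have hS : (∑ j, ∑ k, ∑ l, dN k j l * a l k * αv j)
      = (∑ j, ∑ k, ∑ l, b j l * dP k k l * αv j)
        - (∑ j, ∑ k, ∑ l, dN k k l * a l j * αv j)
        - (∑ j, ∑ k, ∑ l, b k l * dP k l j * αv j) := by
    have h : ∀ j : Fin n, (∑ k, ∑ l, dN k j l * a l k * αv j)
        = (∑ k, ∑ l, b j l * dP k k l * αv j)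
          - (∑ k, ∑ l, dN k k l * a l j * αv j)
          - (∑ k, ∑ l, b k l * dP k l j * αv j) := by
      intro j
      have h2 := congrArg (· * αv j) (hBpp j)
      simpa [Finset.sum_mul, sub_mul, Finset.sum_sub_distrib] using h2
    rw [Finset.sum_congr rfl fun j (_ : j ∈ Finset.univ) => h j]
    simp [Finset.sum_sub_distrib]
  -- reorderings
  have h1 : (∑ x : Fin n, ∑ x_1 : Fin n, ∑ i : Fin n, a i x * dN i x_1 x_1 * αv x)
      = ∑ x : Fin n, ∑ x_1 : Fin n, ∑ i : Fin n, a x x_1 * dN x i i * αv x_1 :=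
    sum3_rot (fun j m l => a l j * dN l m m * αv j)
  have hB1 : (∑ x : Fin n, ∑ x_1 : Fin n, ∑ i : Fin n, (1:ℝ)/2 * (a x x_1 * dN x i i * αv x_1))
      = 1/2 * ∑ x : Fin n, ∑ x_1 : Fin n, ∑ i : Fin n, a x x_1 * dN x i i * αv x_1 := by
    simp [← Finset.mul_sum]
  have hA2 : (∑ x : Fin n, ∑ x_1 : Fin n, ∑ i : Fin n, a x_1 i * dN i x x_1 * αv x)
      = ∑ j, ∑ k, ∑ l, dN k j l * a l k * αv j := by
    refine Finset.sum_congr rfl fun j _ => ?_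
    rw [Finset.sum_comm]
    exact Finset.sum_congr rfl fun k _ => Finset.sum_congr rfl fun l _ => by ring
  have hB2 : (∑ j, ∑ k, ∑ l, dN k j l * a l k * αv j)
      = ∑ x : Fin n, ∑ x_1 : Fin n, ∑ i : Fin n, a x x_1 * (dN x_1 i x * αv i) :=
    (sum3_rev (fun j k l => dN k j l * a l k * αv j)).trans
      (Finset.sum_congr rfl fun _ _ => Finset.sum_congr rfl fun _ _ =>
        Finset.sum_congr rfl fun _ _ => by ring)
  have h3 : (∑ x : Fin n, ∑ x_1 : Fin n, ∑ i : Fin n, b i x_1 * dP i x_1 x * αv x)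
      = ∑ j, ∑ k, ∑ l, b k l * dP k l j * αv j := by
    refine Finset.sum_congr rfl fun j _ => ?_
    rw [Finset.sum_comm]
  have hA5 : (∑ j, ∑ k, ∑ l, dN k k l * a l j * αv j)
      = ∑ x : Fin n, ∑ x_1 : Fin n, ∑ i : Fin n, a i x * dN x_1 x_1 i * αv x :=
    Finset.sum_congr rfl fun _ _ => Finset.sum_congr rfl fun _ _ =>
      Finset.sum_congr rfl fun _ _ => by ring
  have hB34 : (∑ x : Fin n, ∑ x_1 : Fin n, ∑ i : Fin n, b x i * a i x_1 * dα x_1 x)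
      = ∑ x : Fin n, ∑ x_1 : Fin n, ∑ i : Fin n, a x x_1 * (b i x * dα x_1 i) :=
    (sum3_rev (fun j k l => b j l * a l k * dα k j)).trans
      (Finset.sum_congr rfl fun _ _ => Finset.sum_congr rfl fun _ _ =>
        Finset.sum_congr rfl fun _ _ => by ring)
  simp only [Finset.sum_mul, Finset.mul_sum, mul_add, sub_mul, add_mul, neg_mul,
    Finset.sum_add_distrib, Finset.sum_sub_distrib]
  linarith [hS, h1, hB1, hA2, hB2, h3, hA5, hB34]

theorem trace_of_concomitant_paired_with_covector
    {n : ℕ} (hn : 1 ≤ n)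
    (P N : (Fin n → ℝ) → Matrix (Fin n) (Fin n) ℝ)
    (hP : ∀ i j : Fin n, ContDiff ℝ (⊤ : ℕ∞) (fun x => P x i j))
    (hN : ∀ i j : Fin n, ContDiff ℝ (⊤ : ℕ∞) (fun x => N x i j))
    (hskewP : ∀ x, (P x)ᵀ = -(P x))
    (hskewNP : ∀ x, (N x * P x)ᵀ = -(N x * P x)) :
    ∀ (α : (Fin n → ℝ) → (Fin n → ℝ)),
      (∀ j : Fin n, ContDiff ℝ (⊤ : ℕ∞) (fun x => α x j)) →
      ∀ x : Fin n → ℝ,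
      (1 / 2 : ℝ) * ∑ j, ∑ k, MagriMorosi P N k j k x * α x j
        = (1 / 2 : ℝ) * ∑ l, ∑ j, P x l j * pd l (fun y => ∑ m, N y m m) x * α x j
          + ∑ l, ∑ k, P x l k * pd k (fun y => ∑ j, N y j l * α y j) x
          - ∑ j, ∑ k, (∑ l, N x j l * P x l k) * pd k (fun y => α y j) x := by
  intro α hα x
  have hPd : ∀ i j : Fin n, DifferentiableAt ℝ (fun y => P y i j) x :=
    fun i j => ((hP i j).differentiable (by simp)).differentiableAt
  have hNd : ∀ i j : Fin n, DifferentiableAt ℝ (fun y => N y i j) x :=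
    fun i j => ((hN i j).differentiable (by simp)).differentiableAt
  have hαd : ∀ j : Fin n, DifferentiableAt ℝ (fun y => α y j) x :=
    fun j => ((hα j).differentiable (by simp)).differentiableAt
  -- skewness facts for pd
  have hA' : ∀ m k j : Fin n, pd m (fun y => P y k j) x = - pd m (fun y => P y j k) x := by
    intro m k j
    have hfun : (fun y => P y k j) = fun y => -(P y j k) := by
      funext y
      have h2 : P y j k = -(P y k j) := by
        simpa [Matrix.transpose_apply, Matrix.neg_apply] using congrFun (congrFun (hskewP y) k) j
      linarith
    rw [hfun, pd_neg]
  have hB' : ∀ m j k : Fin n,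
      (∑ l, (pd m (fun y => N y j l) x * P x l k + N x j l * pd m (fun y => P y l k) x))
      = -∑ l, (pd m (fun y => N y k l) x * P x l j + N x k l * pd m (fun y => P y l j) x) := by
    intro m j k
    have hd : ∀ j k : Fin n,
        pd m (fun y => ∑ l, N y j l * P y l k) x
        = ∑ l, (pd m (fun y => N y j l) x * P x l k + N x j l * pd m (fun y => P y l k) x) := by
      intro j k
      rw [pd_sum m (f := fun l y => N y j l * P y l k) x (fun l => (hNd j l).mul (hPd l k))]
      exact Finset.sum_congr rfl fun l _ => pd_mul m _ _ x (hNd j l) (hPd l k)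
    have hfun : (fun y => ∑ l, N y j l * P y l k) = fun y => -(∑ l, N y k l * P y l j) := by
      funext y
      simpa [Matrix.mul_apply, Matrix.transpose_apply, Matrix.neg_apply]
        using congrFun (congrFun (hskewNP y) k) j
    rw [← hd j k, ← hd k j, hfun, pd_neg]
  -- compute the pd's on the RHS
  have htr : ∀ l : Fin n, pd l (fun y => ∑ m, N y m m) x = ∑ m, pd l (fun y => N y m m) x :=
    fun l => pd_sum l _ x (fun m => hNd m m)
  have hNα : ∀ l k : Fin n, pd k (fun y => ∑ j, N y j l * α y j) x
      = ∑ j, (pd k (fun y => N y j l) x * α x j + N x j l * pd k (fun y => α y j) x) := by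
    intro l k
    rw [pd_sum k (f := fun j y => N y j l * α y j) x (fun j => (hNd j l).mul (hαd j))]
    exact Finset.sum_congr rfl fun j _ => pd_mul k _ _ x (hNd j l) (hαd j)
  simp only [MagriMorosi, htr, hNα]
  exact key (fun l j => P x l j) (fun j l => N x j l)
    (fun k j => pd k (fun y => α y j) x)
    (fun m k l => pd m (fun y => N y k l) x)
    (fun m k l => pd m (fun y => P y k l) x)
    (fun j => α x j) hA' hB'
end

section
/- Let N : ℝⁿ → Matrix (Fin n) (Fin n) ℝ be a smooth (1,1)-tensor field whose Nijenhuis torsion vanishes identically. Then for every k ≥ 1, every index i, and every point: Σ_{ℓ=1}^{k} (1/ℓ) Σ_j (N^{k−ℓ})^j_i ∂_j ( Tr(N^ℓ) ) = ∂_i ( Tr(N^k) ). Equivalently, Σ_{ℓ=1}^{k} (ᵗN)^{k−ℓ} d( Tr(N^ℓ)/ℓ ) = d Tr(N^k). -/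
open Matrix BigOperators

/-- The Nijenhuis torsion of a (1,1)-tensor field `N`, in coordinates. -/
noncomputable def nijenhuisTorsion {n : ℕ}
    (N : (Fin n → ℝ) → Matrix (Fin n) (Fin n) ℝ)
    (k i j : Fin n) (x : Fin n → ℝ) : ℝ :=
  ∑ l, (N x l i * pd l (fun y => N y k j) x
      - N x l j * pd l (fun y => N y k i) x
      - N x k l * (pd i (fun y => N y l j) x - pd j (fun y => N y l i) x))

namespace Tele

variable {n : ℕ} (N : (Fin n → ℝ) → Matrix (Fin n) (Fin n) ℝ)

/-- derivative matrix -/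
noncomputable def Dm (l : Fin n) (x : Fin n → ℝ) : Matrix (Fin n) (Fin n) ℝ :=
  Matrix.of fun a b => pd l (fun y => N y a b) x

lemma Dm_apply (l a b : Fin n) (x : Fin n → ℝ) :
    Dm N l x a b = pd l (fun y => N y a b) x := rfl

lemma pd_sum {x : Fin n → ℝ} (l : Fin n) (f : Fin n → (Fin n → ℝ) → ℝ)
    (hf : ∀ c, DifferentiableAt ℝ (f c) x) :
    pd l (fun y => ∑ c, f c y) x = ∑ c, pd l (f c) x := by
  unfold pd
  rw [fderiv_fun_sum (fun c _ => hf c)]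
  simp

lemma pd_mul {x : Fin n → ℝ} (l : Fin n) (f g : (Fin n → ℝ) → ℝ)
    (hf : DifferentiableAt ℝ f x) (hg : DifferentiableAt ℝ g x) :
    pd l (fun y => f y * g y) x = f x * pd l g x + g x * pd l f x := by
  unfold pd
  rw [fderiv_fun_mul hf hg]
  simp

lemma contDiff_entry_pow (hN : ∀ i j : Fin n, ContDiff ℝ (⊤ : ℕ∞) (fun x => N x i j))
    (m : ℕ) (a b : Fin n) : ContDiff ℝ (⊤ : ℕ∞) (fun y => ((N y) ^ m) a b) := by
  induction m generalizing a b with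
  | zero =>
      simp only [pow_zero]
      have : (fun y : Fin n → ℝ => (1 : Matrix (Fin n) (Fin n) ℝ) a b)
          = fun _ => (1 : Matrix (Fin n) (Fin n) ℝ) a b := rfl
      exact contDiff_const
  | succ m ih =>
      have h : (fun y => ((N y) ^ (m+1)) a b)
          = fun y => ∑ c, ((N y) ^ m) a c * N y c b := by
        funext y; rw [pow_succ, Matrix.mul_apply]
      rw [h]
      exact ContDiff.sum fun c _ => (ih a c).mul (hN c b)

lemma diffAt_entry_pow (hN : ∀ i j : Fin n, ContDiff ℝ (⊤ : ℕ∞) (fun x => N x i j))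
    (m : ℕ) (a b : Fin n) (x : Fin n → ℝ) :
    DifferentiableAt ℝ (fun y => ((N y) ^ m) a b) x :=
  (contDiff_entry_pow N hN m a b).differentiable (by simp) x

lemma pd_pow_entry (hN : ∀ i j : Fin n, ContDiff ℝ (⊤ : ℕ∞) (fun x => N x i j))
    (m : ℕ) (l a b : Fin n) (x : Fin n → ℝ) :
    pd l (fun y => ((N y) ^ m) a b) x
      = ∑ s ∈ Finset.range m, ((N x) ^ s * Dm N l x * (N x) ^ (m - 1 - s)) a b := by
  induction m generalizing a b with
  | zero =>
      have h : (fun y => ((N y) ^ 0) a b)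
          = fun _ : Fin n → ℝ => (1 : Matrix (Fin n) (Fin n) ℝ) a b := by
        funext y; rw [pow_zero]
      rw [h]
      simp [pd]
  | succ m ih =>
      have h : (fun y => ((N y) ^ (m+1)) a b)
          = fun y => ∑ c, N y a c * ((N y) ^ m) c b := by
        funext y; rw [pow_succ', Matrix.mul_apply]
      rw [h, pd_sum]
      · have hterm : ∀ c : Fin n,
            pd l (fun y => N y a c * ((N y) ^ m) c b) x
              = N x a c * pd l (fun y => ((N y) ^ m) c b) x
                + ((N x) ^ m) c b * pd l (fun y => N y a c) x := by
          intro c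
          exact pd_mul l _ _ ((hN a c).differentiable (by simp) x)
            (diffAt_entry_pow N hN m c b x)
        simp_rw [hterm, ih]
        rw [Finset.sum_range_succ']
        have h0 : ((N x) ^ 0 * Dm N l x * (N x) ^ (m + 1 - 1 - 0)) a b
            = ∑ c, ((N x) ^ m) c b * pd l (fun y => N y a c) x := by
          have e : m + 1 - 1 - 0 = m := by omega
          rw [e, pow_zero, one_mul, Matrix.mul_apply]
          exact Finset.sum_congr rfl fun c _ => by rw [Dm_apply, mul_comm]
        rw [Finset.sum_add_distrib, ← h0]
        congr 1
        simp_rw [Finset.mul_sum]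
        rw [Finset.sum_comm]
        refine Finset.sum_congr rfl fun s hs => ?_
        have hm : ((N x) ^ (s+1) * Dm N l x * (N x) ^ (m + 1 - 1 - (s+1))) a b
            = ((N x) * ((N x) ^ s * Dm N l x * (N x) ^ (m - 1 - s))) a b := by
          have h1 : m + 1 - 1 - (s + 1) = m - 1 - s := by omega
          rw [h1, pow_succ']
          rw [Matrix.mul_assoc, Matrix.mul_assoc, Matrix.mul_assoc]
        rw [hm, Matrix.mul_apply]
      · intro c
        exact ((hN a c).differentiable (by simp) x).mul (diffAt_entry_pow N hN m c b x)


lemma pd_trace_pow (hN : ∀ i j : Fin n, ContDiff ℝ (⊤ : ℕ∞) (fun x => N x i j))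
    (m : ℕ) (l : Fin n) (x : Fin n → ℝ) :
    pd l (fun y => ∑ a, ((N y) ^ (m+1)) a a) x
      = ((m : ℝ) + 1) * Matrix.trace ((N x) ^ m * Dm N l x) := by
  rw [pd_sum l _ (fun a => diffAt_entry_pow N hN (m+1) a a x)]
  simp_rw [pd_pow_entry N hN (m+1) l]
  rw [Finset.sum_comm]
  have h : ∀ s ∈ Finset.range (m+1),
      ∑ a, ((N x) ^ s * Dm N l x * (N x) ^ (m + 1 - 1 - s)) a a
        = Matrix.trace ((N x) ^ m * Dm N l x) := by
    intro s hs
    have hs' : s ≤ m := by simpa [Nat.lt_succ_iff] using hs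
    have e : m + 1 - 1 - s = m - s := by omega
    have : ∑ a, ((N x) ^ s * Dm N l x * (N x) ^ (m + 1 - 1 - s)) a a
        = Matrix.trace ((N x) ^ s * Dm N l x * (N x) ^ (m - s)) := by
      rw [e]; rfl
    rw [this, Matrix.trace_mul_comm, ← Matrix.mul_assoc, ← pow_add]
    have e2 : m - s + s = m := by omega
    rw [e2]
  rw [Finset.sum_congr rfl h, Finset.sum_const, Finset.card_range]
  rw [nsmul_eq_mul]
  push_cast
  ring

lemma key (hN : ∀ i j : Fin n, ContDiff ℝ (⊤ : ℕ∞) (fun x => N x i j))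
    (hT : ∀ (a i j : Fin n) (x : Fin n → ℝ), nijenhuisTorsion N a i j x = 0)
    (m : ℕ) (j : Fin n) (x : Fin n → ℝ) :
    ∑ l, N x l j * Matrix.trace ((N x) ^ m * Dm N l x)
      = Matrix.trace ((N x) ^ (m+1) * Dm N j x) := by
  have rot : ∀ f : Fin n → Fin n → Fin n → ℝ,
      ∑ u, ∑ k, ∑ l, f u k l = ∑ l, ∑ u, ∑ k, f u k l := by
    intro f
    calc ∑ u, ∑ k, ∑ l, f u k l = ∑ u, ∑ l, ∑ k, f u k l :=
          Finset.sum_congr rfl fun u _ => Finset.sum_comm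
      _ = ∑ l, ∑ u, ∑ k, f u k l := Finset.sum_comm
  have h0 : ∑ u, ∑ k, ((N x) ^ m) u k * nijenhuisTorsion N k u j x = 0 := by
    simp [hT]
  have hexp : ∀ u k : Fin n, ((N x) ^ m) u k * nijenhuisTorsion N k u j x
      = (∑ l, ((N x) ^ m) u k * (N x l u * Dm N l x k j))
        - (∑ l, ((N x) ^ m) u k * (N x l j * Dm N l x k u))
        - (∑ l, ((N x) ^ m) u k * (N x k l * Dm N u x l j))
        + (∑ l, ((N x) ^ m) u k * (N x k l * Dm N j x l u)) := by
    intro u k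
    rw [nijenhuisTorsion, Finset.mul_sum]
    rw [← Finset.sum_sub_distrib, ← Finset.sum_sub_distrib, ← Finset.sum_add_distrib]
    refine Finset.sum_congr rfl fun l _ => ?_
    simp only [Dm_apply]
    ring
  simp only [hexp, Finset.sum_add_distrib, Finset.sum_sub_distrib] at h0
  have e13 : ∑ u, ∑ k, ∑ l, ((N x) ^ m) u k * (N x l u * Dm N l x k j)
      = ∑ u, ∑ k, ∑ l, ((N x) ^ m) u k * (N x k l * Dm N u x l j) := by
    have hcomm : N x * (N x) ^ m = (N x) ^ m * N x := by
      rw [← pow_succ', ← pow_succ]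
    have l1 : ∑ u, ∑ k, ∑ l, ((N x) ^ m) u k * (N x l u * Dm N l x k j)
        = ∑ l, ∑ k, (N x * (N x) ^ m) l k * Dm N l x k j := by
      rw [rot]
      refine Finset.sum_congr rfl fun l _ => ?_
      rw [Finset.sum_comm]
      refine Finset.sum_congr rfl fun k _ => ?_
      rw [Matrix.mul_apply, Finset.sum_mul]
      exact Finset.sum_congr rfl fun u _ => by ring
    have l3 : ∑ u, ∑ k, ∑ l, ((N x) ^ m) u k * (N x k l * Dm N u x l j)
        = ∑ u, ∑ l, ((N x) ^ m * N x) u l * Dm N u x l j := by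
      refine Finset.sum_congr rfl fun u _ => ?_
      rw [Finset.sum_comm]
      refine Finset.sum_congr rfl fun l _ => ?_
      rw [Matrix.mul_apply, Finset.sum_mul]
      exact Finset.sum_congr rfl fun k _ => by ring
    rw [l1, l3, hcomm]
  have e2 : ∑ u, ∑ k, ∑ l, ((N x) ^ m) u k * (N x l j * Dm N l x k u)
      = ∑ l, N x l j * Matrix.trace ((N x) ^ m * Dm N l x) := by
    rw [rot]
    refine Finset.sum_congr rfl fun l _ => ?_
    have ht : Matrix.trace ((N x) ^ m * Dm N l x)
        = ∑ u, ∑ k, ((N x) ^ m) u k * Dm N l x k u := by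
      simp [Matrix.trace, Matrix.diag, Matrix.mul_apply]
    rw [ht, Finset.mul_sum]
    refine Finset.sum_congr rfl fun u _ => ?_
    rw [Finset.mul_sum]
    exact Finset.sum_congr rfl fun k _ => by ring
  have e4 : ∑ u, ∑ k, ∑ l, ((N x) ^ m) u k * (N x k l * Dm N j x l u)
      = Matrix.trace ((N x) ^ (m+1) * Dm N j x) := by
    have ht : Matrix.trace ((N x) ^ (m+1) * Dm N j x)
        = ∑ u, ∑ l, ((N x) ^ m * N x) u l * Dm N j x l u := by
      rw [pow_succ]
      simp [Matrix.trace, Matrix.diag, Matrix.mul_apply]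
    rw [ht]
    refine Finset.sum_congr rfl fun u _ => ?_
    rw [Finset.sum_comm]
    refine Finset.sum_congr rfl fun l _ => ?_
    rw [Matrix.mul_apply, Finset.sum_mul]
    exact Finset.sum_congr rfl fun k _ => by ring
  rw [← e2, ← e4]
  linarith [h0, e13]

end Tele

theorem telescoping_modular_classes
    {n : ℕ} (hn : 1 ≤ n)
    (N : (Fin n → ℝ) → Matrix (Fin n) (Fin n) ℝ)
    (hN : ∀ i j : Fin n, ContDiff ℝ (⊤ : ℕ∞) (fun x => N x i j))
    (hT : ∀ (a i j : Fin n) (x : Fin n → ℝ), nijenhuisTorsion N a i j x = 0) :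
    ∀ (k : ℕ), 1 ≤ k → ∀ (i : Fin n) (x : Fin n → ℝ),
      ∑ ℓ ∈ Finset.Icc 1 k,
        (1 / (ℓ : ℝ)) * ∑ j, ((N x) ^ (k - ℓ)) j i * pd j (fun y => ∑ a, ((N y) ^ ℓ) a a) x
        = pd i (fun y => ∑ a, ((N y) ^ k) a a) x := by
  intro k hk
  induction k, hk using Nat.le_induction with
  | base =>
      intro i x
      rw [Finset.Icc_self, Finset.sum_singleton]
      simp [Matrix.one_apply]
  | succ k hk ih =>
      intro i x
      obtain ⟨m, rfl⟩ : ∃ m, k = m + 1 := ⟨k - 1, by omega⟩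
      have hins : Finset.Icc 1 (m+1+1) = insert (m+1+1) (Finset.Icc 1 (m+1)) := by
        ext a; simp [Finset.mem_Icc]; omega
      rw [hins, Finset.sum_insert (by simp)]
      have hzero : (m+1+1) - (m+1+1) = 0 := by omega
      rw [hzero]
      have hfirst : ∑ j, ((N x) ^ 0) j i * pd j (fun y => ∑ a, ((N y) ^ (m+1+1)) a a) x
          = pd i (fun y => ∑ a, ((N y) ^ (m+1+1)) a a) x := by
        simp [Matrix.one_apply]
      rw [hfirst]
      have hsec : ∀ ℓ ∈ Finset.Icc 1 (m+1),
          (1/(ℓ:ℝ)) * ∑ j, ((N x) ^ (m+1+1-ℓ)) j i * pd j (fun y => ∑ a, ((N y) ^ ℓ) a a) x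
          = ∑ c, N x c i *
              ((1/(ℓ:ℝ)) * ∑ j, ((N x) ^ (m+1-ℓ)) j c * pd j (fun y => ∑ a, ((N y) ^ ℓ) a a) x) := by
        intro ℓ hl
        have hmem := Finset.mem_Icc.mp hl
        have he : m+1+1-ℓ = (m+1-ℓ)+1 := by omega
        rw [he]
        have hin : ∀ j : Fin n,
            ((N x) ^ ((m+1-ℓ)+1)) j i * pd j (fun y => ∑ a, ((N y) ^ ℓ) a a) x
            = ∑ c, ((N x) ^ (m+1-ℓ)) j c * N x c i * pd j (fun y => ∑ a, ((N y) ^ ℓ) a a) x := by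
          intro j
          rw [pow_succ, Matrix.mul_apply, Finset.sum_mul]
        simp_rw [hin]
        rw [Finset.sum_comm, Finset.mul_sum]
        refine Finset.sum_congr rfl fun c _ => ?_
        rw [Finset.mul_sum, Finset.mul_sum, Finset.mul_sum]
        refine Finset.sum_congr rfl fun j _ => ?_
        ring
      rw [Finset.sum_congr rfl hsec, Finset.sum_comm]
      simp_rw [← Finset.mul_sum]
      have hih : ∀ c : Fin n,
          ∑ ℓ ∈ Finset.Icc 1 (m+1),
            (1/(ℓ:ℝ)) * ∑ j, ((N x) ^ (m+1-ℓ)) j c * pd j (fun y => ∑ a, ((N y) ^ ℓ) a a) x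
          = pd c (fun y => ∑ a, ((N y) ^ (m+1)) a a) x := fun c => ih c x
      rw [Finset.sum_congr rfl fun c _ => by rw [hih c]]
      have h3 : ∑ c, N x c i * pd c (fun y => ∑ a, ((N y) ^ (m+1)) a a) x
          = ((m:ℝ)+1) * Matrix.trace ((N x) ^ (m+1) * Tele.Dm N i x) := by
        trans ((m:ℝ)+1) * ∑ c, N x c i * Matrix.trace ((N x) ^ m * Tele.Dm N c x)
        · rw [Finset.mul_sum]
          exact Finset.sum_congr rfl fun c _ => by
            rw [Tele.pd_trace_pow N hN m c x]; ring
        · rw [Tele.key N hN hT m i x]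
      rw [h3, Tele.pd_trace_pow N hN (m+1) i x]
      have h2 : ((m:ℝ)+1+1) ≠ 0 := by positivity
      push_cast
      field_simp
      ring
end

section
/- Fix k ≥ 1. Let P and N be smooth matrix-valued maps on ℝⁿ such that P(x) is skew-symmetric and N(x)P(x) is skew-symmetric for every x. For any smooth positive function ρ : ℝⁿ → ℝ, define the modular vector field of the bivector N^m P with respect to the density ρ by (X^m_ρ)^l = ρ^{-1} Σ_j ∂_j ( ρ (N^m P)^{jl} ). Then the vector field X^k_ρ − N X^{k−1}_ρ (with components (X^k_ρ)^l − Σ_i N^l_i (X^{k−1}_ρ)^i) does not depend on ρ: it equals X^k_1 − N X^{k−1}_1, the value obtained for ρ ≡ 1. -/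
open Matrix BigOperators

/-- The modular vector field of the bivector `N^m P` with respect to the density `ρ`:
`(X^m_ρ)^l = ρ⁻¹ Σ_j ∂_j ( ρ (N^m P)^{jl} )`. -/
noncomputable def modularVF {n : ℕ}
    (P N : (Fin n → ℝ) → Matrix (Fin n) (Fin n) ℝ)
    (ρ : (Fin n → ℝ) → ℝ) (m : ℕ) (l : Fin n) (x : Fin n → ℝ) : ℝ :=
  (ρ x)⁻¹ * ∑ j, pd j (fun y => ρ y * ((N y) ^ m * P y) j l) x

lemma contDiff_pow_entry {n : ℕ} (N : (Fin n → ℝ) → Matrix (Fin n) (Fin n) ℝ)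
    (hN : ∀ i j : Fin n, ContDiff ℝ (⊤ : ℕ∞) (fun x => N x i j)) (m : ℕ) (a b : Fin n) :
    ContDiff ℝ (⊤ : ℕ∞) (fun x => ((N x) ^ m) a b) := by
  induction m generalizing a b with
  | zero => simp only [pow_zero, Matrix.one_apply]; exact contDiff_const
  | succ m ih =>
    have : (fun x => ((N x) ^ (m + 1)) a b)
        = fun x => ∑ c, ((N x) ^ m) a c * N x c b := by
      funext x; rw [pow_succ, Matrix.mul_apply]
    rw [this]
    exact ContDiff.sum fun c _ => (ih a c).mul (hN c b)

lemma contDiff_NP_entry {n : ℕ} (P N : (Fin n → ℝ) → Matrix (Fin n) (Fin n) ℝ)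
    (hP : ∀ i j : Fin n, ContDiff ℝ (⊤ : ℕ∞) (fun x => P x i j))
    (hN : ∀ i j : Fin n, ContDiff ℝ (⊤ : ℕ∞) (fun x => N x i j)) (m : ℕ) (a b : Fin n) :
    ContDiff ℝ (⊤ : ℕ∞) (fun x => ((N x) ^ m * P x) a b) := by
  have : (fun x => ((N x) ^ m * P x) a b)
      = fun x => ∑ c, ((N x) ^ m) a c * P x c b := by
    funext x; rw [Matrix.mul_apply]
  rw [this]
  exact ContDiff.sum fun c _ => (contDiff_pow_entry N hN m a c).mul (hP c b)

theorem modular_vector_field_independent_of_density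
    {n : ℕ} (hn : 1 ≤ n)
    (k : ℕ) (hk : 1 ≤ k)
    (P N : (Fin n → ℝ) → Matrix (Fin n) (Fin n) ℝ)
    (hP : ∀ i j : Fin n, ContDiff ℝ (⊤ : ℕ∞) (fun x => P x i j))
    (hN : ∀ i j : Fin n, ContDiff ℝ (⊤ : ℕ∞) (fun x => N x i j))
    (hskewP : ∀ x, (P x)ᵀ = -(P x))
    (hskewNP : ∀ x, (N x * P x)ᵀ = -(N x * P x))
    (ρ : (Fin n → ℝ) → ℝ) (hρ : ContDiff ℝ (⊤ : ℕ∞) ρ) (hρpos : ∀ x, 0 < ρ x) :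
    ∀ (l : Fin n) (x : Fin n → ℝ),
      modularVF P N ρ k l x - ∑ i, N x l i * modularVF P N ρ (k - 1) i x
        = modularVF P N (fun _ => 1) k l x
          - ∑ i, N x l i * modularVF P N (fun _ => 1) (k - 1) i x := by
  intro l x
  have hne : ρ x ≠ 0 := (hρpos x).ne'
  set g : Fin n → ℝ := fun j => fderiv ℝ ρ x (Pi.single j 1) with hg
  -- key decomposition
  have key : ∀ (m : ℕ) (l : Fin n),
      modularVF P N ρ m l x = modularVF P N (fun _ => 1) m l x
        + (ρ x)⁻¹ * ∑ j, g j * ((N x) ^ m * P x) j l := by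
    intro m l
    have hρd : DifferentiableAt ℝ ρ x := (hρ.differentiable (by simp)) x
    have hpd : ∀ j : Fin n, pd j (fun y => ρ y * ((N y) ^ m * P y) j l) x
        = ρ x * pd j (fun y => ((N y) ^ m * P y) j l) x + g j * ((N x) ^ m * P x) j l := by
      intro j
      have hq : DifferentiableAt ℝ (fun y => ((N y) ^ m * P y) j l) x :=
        ((contDiff_NP_entry P N hP hN m j l).differentiable (by simp)) x
      simp only [pd, fderiv_fun_mul hρd hq]
      simp [mul_comm, hg]
    have h1 : modularVF P N (fun _ => 1) m l x
        = ∑ j, pd j (fun y => ((N y) ^ m * P y) j l) x := by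
      simp only [modularVF, one_mul, inv_one]
    rw [h1, modularVF]
    rw [Finset.sum_congr rfl fun j _ => hpd j, Finset.sum_add_distrib, mul_add,
      ← Finset.mul_sum, inv_mul_cancel_left₀ hne]
  -- matrix identity
  have hPN : P x * (N x)ᵀ = N x * P x := by
    have h := hskewNP x
    rw [Matrix.transpose_mul, hskewP x, Matrix.neg_mul] at h
    exact neg_injective h
  have hM : (N x) ^ (k - 1) * P x * (N x)ᵀ = (N x) ^ k * P x := by
    rw [Matrix.mul_assoc, hPN, ← Matrix.mul_assoc, ← pow_succ]
    congr 2
    omega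
  -- the correction terms cancel
  have hsum : ∑ j, g j * ((N x) ^ k * P x) j l
      = ∑ i, N x l i * ∑ j, g j * ((N x) ^ (k - 1) * P x) j i := by
    rw [← hM]
    rw [Finset.sum_congr rfl fun j _ => by
      rw [Matrix.mul_apply, Finset.mul_sum]]
    rw [Finset.sum_comm]
    refine Finset.sum_congr rfl fun i _ => ?_
    rw [Finset.mul_sum]
    refine Finset.sum_congr rfl fun j _ => ?_
    simp [Matrix.transpose_apply]
    ring
  have hL : (∑ i, N x l i * modularVF P N ρ (k - 1) i x)
      = ∑ i, N x l i * (modularVF P N (fun _ => 1) (k - 1) i x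
          + (ρ x)⁻¹ * ∑ j, g j * ((N x) ^ (k - 1) * P x) j i) :=
    Finset.sum_congr rfl fun i _ => by rw [key (k - 1) i]
  rw [key k l, hL]
  simp only [mul_add]
  rw [Finset.sum_add_distrib]
  have hcorr : (ρ x)⁻¹ * ∑ j, g j * ((N x) ^ k * P x) j l
      = ∑ i, N x l i * ((ρ x)⁻¹ * ∑ j, g j * ((N x) ^ (k - 1) * P x) j i) := by
    rw [hsum, Finset.mul_sum]
    exact Finset.sum_congr rfl fun i _ => by ring
  rw [hcorr]
  ring
end
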